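/- arXiv:1805.01560 — 9 statements merged into one kernel-verified Lean document; each statement's English description precedes it below -/
import Mathlib

section
/- Let (X,q) be an asymmetric normed space. If the closed unit ball B_q[0,1] = {x : q(x) ≤ 1} is closed in the topology induced by q, then (X,q) satisfies the separation axiom T3 (regularity without T1). -/
/-!
The open balls `{y | q (y - c) < ε}` form a basis of the topology, and the open ball of radius
`ε` around `x` contains the closed ball `{y | q (y - x) ≤ ε / 2}`. Since `y ↦ r⁻¹ • (y - x)` is
continuous for `r > 0` and pulls the closed unit ball back to the closed ball of radius `r` around
`x`, every closed ball is closed. Hence every point has a neighbourhood basis of closed sets.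
-/

open TopologicalSpace Filter Set Topology

namespace AsymmetricNorm

variable {X : Type*} [AddCommGroup X] (q : X → ℝ)

def ball (x : X) (ε : ℝ) : Set X := {y | q (y - x) < ε}

def closedBall (x : X) (ε : ℝ) : Set X := {y | q (y - x) ≤ ε}

def balls : Set (Set X) := {s | ∃ (c : X) (ε : ℝ), 0 < ε ∧ s = ball q c ε}

variable {q}

lemma map_sub_le_map_sub_add (htri : ∀ x y, q (x + y) ≤ q x + q y) (x y z : X) :
    q (x - z) ≤ q (x - y) + q (y - z) := by
  simpa using htri (x - y) (y - z)

lemma ball_mono {x : X} {ε δ : ℝ} (h : ε ≤ δ) : ball q x ε ⊆ ball q x δ :=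
  fun _ hy => lt_of_lt_of_le hy h

lemma ball_subset_ball (htri : ∀ x y, q (x + y) ≤ q x + q y) (x c : X) (ε : ℝ) :
    ball q x (ε - q (x - c)) ⊆ ball q c ε := fun y (hy : q (y - x) < ε - q (x - c)) => by
  have := map_sub_le_map_sub_add htri y x c
  change q (y - c) < ε
  linarith

variable [Module ℝ X]

lemma map_zero (hhom : ∀ (a : ℝ) (x : X), 0 ≤ a → q (a • x) = a * q x) : q 0 = 0 := by
  simpa using hhom 0 0 le_rfl

lemma mem_ball_self (hhom : ∀ (a : ℝ) (x : X), 0 ≤ a → q (a • x) = a * q x) {x : X} {ε : ℝ}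
    (hε : 0 < ε) : x ∈ ball q x ε := by
  simpa [ball, map_zero hhom] using hε

variable [t : TopologicalSpace X]

lemma isTopologicalBasis_balls (hhom : ∀ (a : ℝ) (x : X), 0 ≤ a → q (a • x) = a * q x)
    (htri : ∀ x y, q (x + y) ≤ q x + q y) (ht : t = generateFrom (balls q)) :
    IsTopologicalBasis (balls q) := by
  refine ⟨?_, ?_, ht⟩
  · rintro _ ⟨c₁, ε₁, -, rfl⟩ _ ⟨c₂, ε₂, -, rfl⟩ x ⟨hx₁, hx₂⟩
    have h₁ : 0 < ε₁ - q (x - c₁) := sub_pos.2 hx₁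
    have h₂ : 0 < ε₂ - q (x - c₂) := sub_pos.2 hx₂
    refine ⟨ball q x (min (ε₁ - q (x - c₁)) (ε₂ - q (x - c₂))), ⟨x, _, lt_min h₁ h₂, rfl⟩,
      mem_ball_self hhom (lt_min h₁ h₂), subset_inter ?_ ?_⟩
    · exact (ball_mono (min_le_left _ _)).trans (ball_subset_ball htri x c₁ ε₁)
    · exact (ball_mono (min_le_right _ _)).trans (ball_subset_ball htri x c₂ ε₂)
  · exact eq_univ_of_forall fun x => ⟨ball q x 1, ⟨x, 1, one_pos, rfl⟩, mem_ball_self hhom one_pos⟩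

lemma nhds_hasBasis_ball (hhom : ∀ (a : ℝ) (x : X), 0 ≤ a → q (a • x) = a * q x)
    (htri : ∀ x y, q (x + y) ≤ q x + q y) (ht : t = generateFrom (balls q)) (x : X) :
    (𝓝 x).HasBasis (fun ε : ℝ => 0 < ε) (ball q x) := by
  refine ⟨fun s => ?_⟩
  rw [(isTopologicalBasis_balls hhom htri ht).mem_nhds_iff]
  constructor
  · rintro ⟨_, ⟨c, ε, -, rfl⟩, hx, hs⟩
    exact ⟨ε - q (x - c), sub_pos.2 hx, (ball_subset_ball htri x c ε).trans hs⟩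
  · rintro ⟨ε, hε, hs⟩
    exact ⟨_, ⟨x, ε, hε, rfl⟩, mem_ball_self hhom hε, hs⟩

lemma nhds_hasBasis_closedBall (hhom : ∀ (a : ℝ) (x : X), 0 ≤ a → q (a • x) = a * q x)
    (htri : ∀ x y, q (x + y) ≤ q x + q y) (ht : t = generateFrom (balls q)) (x : X) :
    (𝓝 x).HasBasis (fun ε : ℝ => 0 < ε) (closedBall q x) := by
  refine (nhds_hasBasis_ball hhom htri ht x).to_hasBasis
    (fun ε hε => ⟨ε / 2, half_pos hε, fun y (hy : q (y - x) ≤ ε / 2) => ?_⟩)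
    (fun ε hε => ⟨ε, hε, fun y (hy : q (y - x) < ε) => hy.le⟩)
  change q (y - x) < ε
  linarith

lemma continuous_smul_sub (hhom : ∀ (a : ℝ) (x : X), 0 ≤ a → q (a • x) = a * q x)
    (ht : t = generateFrom (balls q)) {a : ℝ} (ha : 0 < a) (b : X) :
    Continuous fun y : X => a • (y - b) := by
  rw [ht, continuous_generateFrom_iff]
  rintro _ ⟨c, ε, hε, rfl⟩
  refine isOpen_generateFrom_of_mem ⟨b + a⁻¹ • c, ε / a, div_pos hε ha, ?_⟩
  ext y
  have hrescale : a • (y - b) - c = a • (y - (b + a⁻¹ • c)) := by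
    rw [smul_sub, smul_sub, smul_add, smul_inv_smul₀ ha.ne']
    abel
  change q (a • (y - b) - c) < ε ↔ q (y - (b + a⁻¹ • c)) < ε / a
  rw [hrescale, hhom a _ ha.le, lt_div_iff₀' ha]

lemma isClosed_closedBall (hhom : ∀ (a : ℝ) (x : X), 0 ≤ a → q (a • x) = a * q x)
    (ht : t = generateFrom (balls q)) (hclosed : IsClosed {x : X | q x ≤ 1}) (x : X) {r : ℝ}
    (hr : 0 < r) : IsClosed (closedBall q x r) := by
  have hpreimage : closedBall q x r = (fun y => r⁻¹ • (y - x)) ⁻¹' {z | q z ≤ 1} := by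
    ext y
    change q (y - x) ≤ r ↔ q (r⁻¹ • (y - x)) ≤ 1
    rw [hhom _ _ (inv_nonneg.2 hr.le), inv_mul_le_one₀ hr]
  rw [hpreimage]
  exact hclosed.preimage (continuous_smul_sub hhom ht (inv_pos.2 hr) x)

end AsymmetricNorm

open AsymmetricNorm in
theorem stmt_1_general {X : Type*} [AddCommGroup X] [Module ℝ X]
    (q : X → ℝ)
    (hhom : ∀ (a : ℝ) (x : X), 0 ≤ a → q (a • x) = a * q x)
    (htri : ∀ x y, q (x + y) ≤ q x + q y)
    [t : TopologicalSpace X]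
    (ht : t = TopologicalSpace.generateFrom
      {s : Set X | ∃ (c : X) (ε : ℝ), 0 < ε ∧ s = {y | q (y - c) < ε}})
    (hclosed : IsClosed {x : X | q x ≤ 1}) :
    RegularSpace X :=
  .of_hasBasis (nhds_hasBasis_closedBall hhom htri ht)
    fun x _ hr => isClosed_closedBall hhom ht hclosed x hr

/-- If the closed unit ball of an asymmetric normed space is
closed in the topology induced by `q`, then the space is T3 (regular without T1). -/
theorem stmt_1 {X : Type*} [AddCommGroup X] [Module ℝ X]
    (q : X → ℝ)
    (hnn : ∀ x, 0 ≤ q x)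
    (hhom : ∀ (a : ℝ) (x : X), 0 ≤ a → q (a • x) = a * q x)
    (htri : ∀ x y, q (x + y) ≤ q x + q y)
    (hsep : ∀ x, q x = 0 → q (-x) = 0 → x = 0)
    [t : TopologicalSpace X]
    (ht : t = TopologicalSpace.generateFrom
      {s : Set X | ∃ (c : X) (ε : ℝ), 0 < ε ∧ s = {y | q (y - c) < ε}})
    (hclosed : IsClosed {x : X | q x ≤ 1}) :
    RegularSpace X :=
  stmt_1_general q hhom htri (t := t) ht hclosed
end

section
/- An asymmetric normed space (X,q) is Hausdorff if and only if ‖x‖_q > 0 for every x ≠ 0, where ‖x‖_q = inf{q(y) + q(y−x) : y ∈ X}. -/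
/-!
By the triangle inequality the balls `B_q(a, ε)` form a neighbourhood basis at `a`, so `X` is
Hausdorff iff for `a ≠ b` some balls `B_q(a, ε)` and `B_q(b, δ)` are disjoint. Translating by `b`,
this says that `q z < δ` forces `q (z - (a - b)) ≥ ε`, which amounts to a positive lower bound
for `q z + q (z - (a - b))`, i.e. to `‖a - b‖_q > 0`.
-/

open Topology TopologicalSpace

namespace AsymNorm

variable {X : Type*} [AddCommGroup X] (q : X → ℝ)

def ball (c : X) (ε : ℝ) : Set X := {y | q (y - c) < ε}

def balls : Set (Set X) := {s | ∃ (c : X) (ε : ℝ), 0 < ε ∧ s = ball q c ε}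

/-- `‖x‖_q` in the notation of the paper. -/
noncomputable def symmNorm (x : X) : ℝ := ⨅ y, q y + q (y - x)

variable {q}

theorem ball_subset_ball (htri : ∀ x y, q (x + y) ≤ q x + q y) (c p : X) (ε : ℝ) :
    ball q p (ε - q (p - c)) ⊆ ball q c ε := by
  intro y hy
  have := htri (y - p) (p - c)
  rw [sub_add_sub_cancel] at this
  simp only [ball, Set.mem_ofPred_eq] at hy ⊢
  linarith

theorem mem_ball_self (hq0 : q 0 = 0) {c : X} {ε : ℝ} (hε : 0 < ε) : c ∈ ball q c ε := by
  simpa [ball, hq0] using hε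

theorem isTopologicalBasis_balls (htri : ∀ x y, q (x + y) ≤ q x + q y) (hq0 : q 0 = 0)
    [t : TopologicalSpace X] (ht : t = generateFrom (balls q)) :
    IsTopologicalBasis (balls q) where
  exists_subset_inter := by
    rintro _ ⟨c₁, ε₁, -, rfl⟩ _ ⟨c₂, ε₂, -, rfl⟩ p ⟨hp₁, hp₂⟩
    have hpos₁ : 0 < ε₁ - q (p - c₁) := sub_pos.mpr hp₁
    have hpos₂ : 0 < ε₂ - q (p - c₂) := sub_pos.mpr hp₂
    refine ⟨_, ⟨p, _, lt_min hpos₁ hpos₂, rfl⟩, mem_ball_self hq0 (lt_min hpos₁ hpos₂), ?_⟩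
    intro y (hy : q (y - p) < _)
    exact ⟨ball_subset_ball htri c₁ p ε₁ (hy.trans_le (min_le_left _ _)),
      ball_subset_ball htri c₂ p ε₂ (hy.trans_le (min_le_right _ _))⟩
  sUnion_eq := Set.eq_univ_of_forall fun p => ⟨_, ⟨p, 1, one_pos, rfl⟩, mem_ball_self hq0 one_pos⟩
  eq_generateFrom := ht

theorem nhds_hasBasis_ball (htri : ∀ x y, q (x + y) ≤ q x + q y) (hq0 : q 0 = 0)
    [t : TopologicalSpace X] (ht : t = generateFrom (balls q)) (a : X) :
    (𝓝 a).HasBasis (0 < ·) (ball q a) := by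
  refine ⟨fun s => ?_⟩
  rw [(isTopologicalBasis_balls htri hq0 ht).mem_nhds_iff]
  constructor
  · rintro ⟨_, ⟨c, ε, -, rfl⟩, ha, hs⟩
    exact ⟨_, sub_pos.mpr ha, (ball_subset_ball htri c a ε).trans hs⟩
  · rintro ⟨ε, hε, hs⟩
    exact ⟨_, ⟨a, ε, hε, rfl⟩, mem_ball_self hq0 hε, hs⟩

theorem symmNorm_le (hnn : ∀ x, 0 ≤ q x) (x y : X) : symmNorm q x ≤ q y + q (y - x) :=
  ciInf_le ⟨0, by rintro _ ⟨z, rfl⟩; exact add_nonneg (hnn _) (hnn _)⟩ y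

theorem disjoint_ball_iff (a b : X) (ε δ : ℝ) :
    Disjoint (ball q a ε) (ball q b δ) ↔ ∀ z, q z < δ → ε ≤ q (z - (a - b)) := by
  simp only [Set.disjoint_right, ball, Set.mem_ofPred_eq, not_lt]
  refine (Equiv.subRight b).forall_congr fun y => ?_
  rw [Equiv.subRight_apply, sub_sub_sub_cancel_right]

theorem exists_disjoint_ball_iff (hnn : ∀ x, 0 ≤ q x) (a b : X) :
    (∃ ε, 0 < ε ∧ ∃ δ, 0 < δ ∧ Disjoint (ball q a ε) (ball q b δ)) ↔ 0 < symmNorm q (a - b) := by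
  simp only [disjoint_ball_iff]
  constructor
  · rintro ⟨ε, hε, δ, hδ, hdisj⟩
    refine (lt_min hε hδ).trans_le (le_ciInf fun z => ?_)
    by_cases hz : q z < δ
    · linarith [hdisj z hz, hnn z, min_le_left ε δ]
    · linarith [hnn (z - (a - b)), min_le_right ε δ]
  · intro hr
    refine ⟨_, half_pos hr, _, half_pos hr, fun z hz => ?_⟩
    linarith [symmNorm_le hnn (a - b) z]

end AsymNorm

open AsymNorm in
theorem stmt_6_general {X : Type*} [AddCommGroup X] [Module ℝ X]
    (q : X → ℝ)
    (hnn : ∀ x, 0 ≤ q x)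
    (hhom : ∀ (a : ℝ) (x : X), 0 ≤ a → q (a • x) = a * q x)
    (htri : ∀ x y, q (x + y) ≤ q x + q y)
    [t : TopologicalSpace X]
    (ht : t = TopologicalSpace.generateFrom
      {s : Set X | ∃ (c : X) (ε : ℝ), 0 < ε ∧ s = {y | q (y - c) < ε}}) :
    T2Space X ↔ ∀ x : X, x ≠ 0 → 0 < ⨅ y : X, (q y + q (y - x)) := by
  have hq0 : q 0 = 0 := by simpa using hhom 0 0 le_rfl
  have hbasis := nhds_hasBasis_ball htri hq0 ht
  have hdisj (a b : X) : Disjoint (𝓝 a) (𝓝 b) ↔ 0 < symmNorm q (a - b) :=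
    ((hbasis a).disjoint_iff (hbasis b)).trans (exists_disjoint_ball_iff hnn a b)
  simp_rw [t2Space_iff_disjoint_nhds, Pairwise, hdisj]
  exact ⟨fun h x hx => sub_zero x ▸ h hx,
    fun h a b hab => h (a - b) (sub_ne_zero.mpr hab)⟩

theorem stmt_6 {X : Type*} [AddCommGroup X] [Module ℝ X]
    (q : X → ℝ)
    (hnn : ∀ x, 0 ≤ q x)
    (hhom : ∀ (a : ℝ) (x : X), 0 ≤ a → q (a • x) = a * q x)
    (htri : ∀ x y, q (x + y) ≤ q x + q y)
    (hsep : ∀ x, q x = 0 → q (-x) = 0 → x = 0)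
    [t : TopologicalSpace X]
    (ht : t = TopologicalSpace.generateFrom
      {s : Set X | ∃ (c : X) (ε : ℝ), 0 < ε ∧ s = {y | q (y - c) < ε}}) :
    T2Space X ↔ ∀ x : X, x ≠ 0 → 0 < ⨅ y : X, (q y + q (y - x)) :=
  stmt_6_general q hnn hhom htri (t := t) ht
end

section
/- The map ‖x‖_q = inf{q(y) + q(y−x) : y ∈ X} is a seminorm on X, and it is the greatest seminorm p on X satisfying p(x) ≤ q(x) for all x ∈ X. -/
/-!
`symmetrization q`, the `‖·‖_q` of the statement, is the infimal convolution of `q` with its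
reflection `x ↦ q (-x)`. Both are subadditive and positively homogeneous, hence so is their
infimal convolution; negating `x` only reindexes the infimum, so `‖·‖_q` is even, and an even
sublinear function is a seminorm. Choosing `y = x` gives `‖x‖_q ≤ q x`, and a seminorm `p ≤ q`
satisfies `p x ≤ p y + p (y - x) ≤ q y + q (y - x)` for every `y`, whence `p ≤ ‖·‖_q`.
-/

noncomputable def symmetrization {X : Type*} [AddCommGroup X] (q : X → ℝ) (x : X) : ℝ :=
  ⨅ y : X, q y + q (y - x)

section

variable {X : Type*} [AddCommGroup X] {q : X → ℝ}

theorem symmetrization_le (hnn : ∀ x, 0 ≤ q x) (x y : X) :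
    symmetrization q x ≤ q y + q (y - x) :=
  ciInf_le ⟨0, by rintro _ ⟨z, rfl⟩; exact add_nonneg (hnn z) (hnn (z - x))⟩ y

theorem symmetrization_nonneg (hnn : ∀ x, 0 ≤ q x) (x : X) : 0 ≤ symmetrization q x :=
  le_ciInf fun y => add_nonneg (hnn y) (hnn (y - x))

theorem symmetrization_le_self (hnn : ∀ x, 0 ≤ q x) (hq0 : q 0 = 0) (x : X) :
    symmetrization q x ≤ q x := by
  simpa [hq0] using symmetrization_le hnn x x

theorem symmetrization_zero (hnn : ∀ x, 0 ≤ q x) (hq0 : q 0 = 0) :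
    symmetrization q (0 : X) = 0 :=
  le_antisymm (hq0 ▸ symmetrization_le_self hnn hq0 0) (symmetrization_nonneg hnn 0)

theorem symmetrization_neg (x : X) : symmetrization q (-x) = symmetrization q x := by
  unfold symmetrization
  rw [← (Equiv.subRight x).iInf_comp]
  congr 1 with y
  simp only [Equiv.subRight_apply, sub_neg_eq_add, sub_add_cancel]
  exact add_comm _ _

theorem symmetrization_add_le (hnn : ∀ x, 0 ≤ q x) (htri : ∀ x y, q (x + y) ≤ q x + q y)
    (x y : X) :
    symmetrization q (x + y) ≤ symmetrization q x + symmetrization q y :=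
  le_ciInf_add_ciInf fun z w => calc
    symmetrization q (x + y) ≤ q (z + w) + q ((z - x) + (w - y)) := by
      simpa only [add_sub_add_comm] using symmetrization_le hnn (x + y) (z + w)
    _ ≤ (q z + q w) + (q (z - x) + q (w - y)) := add_le_add (htri _ _) (htri _ _)
    _ = (q z + q (z - x)) + (q w + q (w - y)) := by ring

variable [Module ℝ X]

theorem symmetrization_smul_of_pos (hhom : ∀ (a : ℝ) (x : X), 0 ≤ a → q (a • x) = a * q x)
    {a : ℝ} (ha : 0 < a) (x : X) : symmetrization q (a • x) = a * symmetrization q x := by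
  unfold symmetrization
  rw [Real.mul_iInf_of_nonneg ha.le, ← (MulAction.toPerm (Units.mk0 a ha.ne')).iInf_comp]
  congr 1 with y
  simp only [MulAction.toPerm_apply, Units.smul_mk0, ← smul_sub, hhom a _ ha.le, mul_add]

theorem symmetrization_smul (hnn : ∀ x, 0 ≤ q x)
    (hhom : ∀ (a : ℝ) (x : X), 0 ≤ a → q (a • x) = a * q x) (a : ℝ) (x : X) :
    symmetrization q (a • x) = |a| * symmetrization q x := by
  rcases lt_trichotomy a 0 with ha | rfl | ha
  · rw [← neg_smul_neg, symmetrization_smul_of_pos hhom (neg_pos.2 ha), symmetrization_neg,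
      abs_of_neg ha]
  · have hq0 : q 0 = 0 := by simpa using hhom 0 0 le_rfl
    simp [symmetrization_zero hnn hq0]
  · rw [symmetrization_smul_of_pos hhom ha, abs_of_pos ha]

end

theorem le_symmetrization {X : Type*} [AddCommGroup X] {q p : X → ℝ}
    (hp_neg : ∀ x, p (-x) = p x) (hp_add : ∀ x y, p (x + y) ≤ p x + p y)
    (hpq : ∀ x, p x ≤ q x) (x : X) : p x ≤ symmetrization q x :=
  le_ciInf fun y => calc
    p x ≤ p y + p (-(y - x)) := by simpa using hp_add y (x - y)
    _ ≤ q y + q (y - x) := by rw [hp_neg]; exact add_le_add (hpq y) (hpq (y - x))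

theorem stmt_7_general {X : Type*} [AddCommGroup X] [Module ℝ X]
    (q : X → ℝ)
    (hnn : ∀ x, 0 ≤ q x)
    (hhom : ∀ (a : ℝ) (x : X), 0 ≤ a → q (a • x) = a * q x)
    (htri : ∀ x y, q (x + y) ≤ q x + q y)
    (N : X → ℝ) (hN : ∀ x, N x = ⨅ y : X, (q y + q (y - x))) :
    (∀ (a : ℝ) (x : X), N (a • x) = |a| * N x) ∧
    (∀ x y, N (x + y) ≤ N x + N y) ∧
    (∀ x, N x ≤ q x) ∧
    (∀ p : X → ℝ,
      (∀ (a : ℝ) (x : X), p (a • x) = |a| * p x) →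
      (∀ x y, p (x + y) ≤ p x + p y) →
      (∀ x, p x ≤ q x) → ∀ x, p x ≤ N x) := by
  obtain rfl : N = symmetrization q := funext hN
  have hq0 : q 0 = 0 := by simpa using hhom 0 0 le_rfl
  refine ⟨symmetrization_smul hnn hhom, symmetrization_add_le hnn htri,
    symmetrization_le_self hnn hq0, fun p hp_smul hp_add hpq => le_symmetrization ?_ hp_add hpq⟩
  intro x
  simpa using hp_smul (-1) x

theorem stmt_7 {X : Type*} [AddCommGroup X] [Module ℝ X]
    (q : X → ℝ)
    (hnn : ∀ x, 0 ≤ q x)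
    (hhom : ∀ (a : ℝ) (x : X), 0 ≤ a → q (a • x) = a * q x)
    (htri : ∀ x y, q (x + y) ≤ q x + q y)
    (hsep : ∀ x, q x = 0 → q (-x) = 0 → x = 0)
    (N : X → ℝ) (hN : ∀ x, N x = ⨅ y : X, (q y + q (y - x))) :
    (∀ (a : ℝ) (x : X), N (a • x) = |a| * N x) ∧
    (∀ x y, N (x + y) ≤ N x + N y) ∧
    (∀ x, N x ≤ q x) ∧
    (∀ p : X → ℝ,
      (∀ (a : ℝ) (x : X), p (a • x) = |a| * p x) →
      (∀ x y, p (x + y) ≤ p x + p y) →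
      (∀ x, p x ≤ q x) → ∀ x, p x ≤ N x) :=
  stmt_7_general q hnn hhom htri N hN
end

section
/- Let (X,q) be an asymmetric normed space. If the open unit ball B_q(0,1) is bounded with respect to the norm q^s(x) = max{q(x), q(−x)}, then q and q^s are equivalent, i.e., there exist M, N > 0 such that M·q^s(x) ≤ q(x) ≤ N·q^s(x) for all x ∈ X. -/
/-!
Positive homogeneity turns the boundedness of the unit ball into the one-sided estimate
`q (-x) ≤ r * q x`: if `q (-x) > r * q x`, rescaling `x` by `r / q (-x)` gives a point of the
unit ball whose reflection has `q`-value exactly `r`. Hence `q^s ≤ max 1 r * q`, while `q ≤ q^s`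
holds trivially.
-/

section PositivelyHomogeneous

variable {X : Type*} [AddCommGroup X] [Module ℝ X] {q : X → ℝ}

lemma map_zero_of_smul_eq_mul (hhom : ∀ (a : ℝ) (x : X), 0 ≤ a → q (a • x) = a * q x) :
    q 0 = 0 := by
  simpa using hhom 0 0 le_rfl

lemma pos_of_forall_lt_one_neg_lt (hhom : ∀ (a : ℝ) (x : X), 0 ≤ a → q (a • x) = a * q x)
    {r : ℝ} (hr : ∀ x, q x < 1 → q (-x) < r) : 0 < r := by
  have hq0 := map_zero_of_smul_eq_mul hhom
  simpa [hq0] using hr 0 (by simp [hq0])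

lemma neg_le_mul_of_forall_lt_one_neg_lt (hnn : ∀ x, 0 ≤ q x)
    (hhom : ∀ (a : ℝ) (x : X), 0 ≤ a → q (a • x) = a * q x)
    {r : ℝ} (hr : ∀ x, q x < 1 → q (-x) < r) (x : X) : q (-x) ≤ r * q x := by
  have hr0 := (pos_of_forall_lt_one_neg_lt hhom hr).le
  by_contra! hlt
  have hneg : 0 < q (-x) := (mul_nonneg hr0 (hnn x)).trans_lt hlt
  set t := r / q (-x)
  have ht : 0 ≤ t := div_nonneg hr0 hneg.le
  have hball : q (t • x) < 1 := by
    rw [hhom t x ht, div_mul_eq_mul_div, div_lt_one hneg]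
    exact hlt
  have hrefl : q (-(t • x)) = r := by
    rw [← smul_neg, hhom t (-x) ht, div_mul_cancel₀ r hneg.ne']
  exact (hr _ hball).ne hrefl

lemma max_neg_le_mul_of_forall_lt_one_neg_lt (hnn : ∀ x, 0 ≤ q x)
    (hhom : ∀ (a : ℝ) (x : X), 0 ≤ a → q (a • x) = a * q x)
    {r : ℝ} (hr : ∀ x, q x < 1 → q (-x) < r) (x : X) :
    max (q x) (q (-x)) ≤ max 1 r * q x :=
  max_le (le_mul_of_one_le_left (hnn x) (le_max_left _ _))
    ((neg_le_mul_of_forall_lt_one_neg_lt hnn hhom hr x).trans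
      (mul_le_mul_of_nonneg_right (le_max_right _ _) (hnn x)))

end PositivelyHomogeneous

theorem stmt_8_general {X : Type*} [AddCommGroup X] [Module ℝ X]
    (q : X → ℝ)
    (hnn : ∀ x, 0 ≤ q x)
    (hhom : ∀ (a : ℝ) (x : X), 0 ≤ a → q (a • x) = a * q x)
    (hbdd : ∃ r : ℝ, ∀ x : X, q x < 1 → max (q x) (q (-x)) < r) :
    ∃ M N : ℝ, 0 < M ∧ 0 < N ∧
      ∀ x : X, M * max (q x) (q (-x)) ≤ q x ∧ q x ≤ N * max (q x) (q (-x)) := by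
  obtain ⟨r, hr⟩ := hbdd
  have hr' : ∀ x, q x < 1 → q (-x) < r := fun x hx => (le_max_right _ _).trans_lt (hr x hx)
  have hC : 0 < max 1 r := one_pos.trans_le (le_max_left _ _)
  refine ⟨(max 1 r)⁻¹, 1, inv_pos.mpr hC, one_pos, fun x => ⟨?_, ?_⟩⟩
  · rw [inv_mul_le_iff₀ hC]
    exact max_neg_le_mul_of_forall_lt_one_neg_lt hnn hhom hr' x
  · rw [one_mul]
    exact le_max_left _ _

theorem stmt_8 {X : Type*} [AddCommGroup X] [Module ℝ X]
    (q : X → ℝ)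
    (hnn : ∀ x, 0 ≤ q x)
    (hhom : ∀ (a : ℝ) (x : X), 0 ≤ a → q (a • x) = a * q x)
    (htri : ∀ x y, q (x + y) ≤ q x + q y)
    (hsep : ∀ x, q x = 0 → q (-x) = 0 → x = 0)
    (hbdd : ∃ r : ℝ, ∀ x : X, q x < 1 → max (q x) (q (-x)) < r) :
    ∃ M N : ℝ, 0 < M ∧ 0 < N ∧
      ∀ x : X, M * max (q x) (q (-x)) ≤ q x ∧ q x ≤ N * max (q x) (q (-x)) :=
  stmt_8_general q hnn hhom hbdd
end

section
/- Let (X,q) be an asymmetric normed space and Y a linear subspace. The quotient X/Y with the asymmetric seminorm w_Y(x+Y) = inf{q(x+y) : y ∈ Y} is T1 if and only if Y is closed in the topology induced by q. -/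
/-!
A point `x` lies in the closure of `Y` exactly when `Y` comes arbitrarily close to `x` from above,
`q (y - x) < ε`, i.e. when `w_Y (-x + Y) = 0`. On the other hand, in a space whose topology is
generated by the balls of an asymmetric seminorm `p`, `v` lies in the closure of `{u}` iff
`p (u - v) ≤ 0`, so the space is T1 iff `p` vanishes only at `0`. For `X ⧸ Y` this says: every
`x` with `-x ∈ closure Y` lies in `Y`, i.e. `Y` is closed.
-/

open TopologicalSpace

def asymBalls {A : Type*} [AddGroup A] (p : A → ℝ) : Set (Set A) :=
  {s | ∃ (c : A) (ε : ℝ), 0 < ε ∧ s = {y | p (y - c) < ε}}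

section AsymBalls

variable {A : Type*} [AddGroup A] {p : A → ℝ} [t : TopologicalSpace A]

theorem exists_asymBall_subset_of_isOpen (htri : ∀ a b, p (a + b) ≤ p a + p b)
    (ht : t = generateFrom (asymBalls p)) {U : Set A} (hU : IsOpen U) {a : A} (ha : a ∈ U) :
    ∃ ε > 0, {y | p (y - a) < ε} ⊆ U := by
  rw [ht] at hU
  induction hU generalizing a with
  | basic s hs =>
    obtain ⟨c, ε, -, rfl⟩ := hs
    refine ⟨ε - p (a - c), sub_pos.mpr ha, fun y (hy : p (y - a) < ε - p (a - c)) => ?_⟩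
    calc p (y - c) = p ((y - a) + (a - c)) := by rw [sub_add_sub_cancel]
      _ ≤ p (y - a) + p (a - c) := htri _ _
      _ < ε := by linarith
  | univ => exact ⟨1, one_pos, Set.subset_univ _⟩
  | inter s u _ _ ihs ihu =>
    obtain ⟨ε₁, hε₁, h₁⟩ := ihs ha.1
    obtain ⟨ε₂, hε₂, h₂⟩ := ihu ha.2
    exact ⟨min ε₁ ε₂, lt_min hε₁ hε₂, fun y (hy : p (y - a) < min ε₁ ε₂) =>
      ⟨h₁ (lt_min_iff.mp hy).1, h₂ (lt_min_iff.mp hy).2⟩⟩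
  | sUnion σ _ ih =>
    obtain ⟨s, hsσ, has⟩ := ha
    obtain ⟨ε, hε, hsub⟩ := ih s hsσ has
    exact ⟨ε, hε, hsub.trans (Set.subset_sUnion_of_mem hsσ)⟩

theorem mem_closure_iff_asymBall (h0 : p 0 ≤ 0) (htri : ∀ a b, p (a + b) ≤ p a + p b)
    (ht : t = generateFrom (asymBalls p)) {S : Set A} {x : A} :
    x ∈ closure S ↔ ∀ ε > 0, ∃ s ∈ S, p (s - x) < ε := by
  rw [mem_closure_iff]
  constructor
  · intro h ε hε
    have hball : IsOpen {y | p (y - x) < ε} :=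
      ht ▸ isOpen_generateFrom_of_mem ⟨x, ε, hε, rfl⟩
    obtain ⟨s, hs, hsS⟩ := h _ hball (show p (x - x) < ε by rw [sub_self]; linarith)
    exact ⟨s, hsS, hs⟩
  · intro h U hU hxU
    obtain ⟨ε, hε, hsub⟩ := exists_asymBall_subset_of_isOpen htri ht hU hxU
    obtain ⟨s, hsS, hs⟩ := h ε hε
    exact ⟨s, hsub hs, hsS⟩

theorem specializes_iff_asymBall (h0 : p 0 ≤ 0) (htri : ∀ a b, p (a + b) ≤ p a + p b)
    (ht : t = generateFrom (asymBalls p)) {u v : A} : u ⤳ v ↔ p (u - v) ≤ 0 := by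
  rw [specializes_iff_mem_closure, mem_closure_iff_asymBall h0 htri ht, ← forall_gt_iff_le]
  simp only [Set.mem_singleton_iff, exists_eq_left, gt_iff_lt]

theorem t1Space_iff_asymBall (h0 : p 0 ≤ 0) (htri : ∀ a b, p (a + b) ≤ p a + p b)
    (ht : t = generateFrom (asymBalls p)) : T1Space A ↔ ∀ z, p z ≤ 0 → z = 0 := by
  simp only [t1Space_iff_specializes_imp_eq, specializes_iff_asymBall h0 htri ht]
  refine ⟨fun h z hz => h (by rwa [sub_zero]), fun h u v huv => sub_eq_zero.mp (h _ huv)⟩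

end AsymBalls

section QuotientSeminorm

variable {R X : Type*} [Ring R] [AddCommGroup X] [Module R X] {q : X → ℝ} (Y : Submodule R X)

theorem iInf_add_le_zero_iff (hnn : ∀ x, 0 ≤ q x) (x : X) :
    (⨅ y : Y, q (x + y)) ≤ 0 ↔ ∀ ε > 0, ∃ y : Y, q (x + y) < ε := by
  have hbdd : BddBelow (Set.range fun y : Y => q (x + y)) :=
    ⟨0, Set.forall_mem_range.2 fun _ => hnn _⟩
  simp only [← forall_gt_iff_le, ciInf_lt_iff hbdd, gt_iff_lt]

theorem iInf_add_le_zero_iff_neg_mem_closure [t : TopologicalSpace X] (hnn : ∀ x, 0 ≤ q x)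
    (h0 : q 0 ≤ 0) (htri : ∀ a b, q (a + b) ≤ q a + q b) (ht : t = generateFrom (asymBalls q))
    (x : X) : (⨅ y : Y, q (x + y)) ≤ 0 ↔ -x ∈ closure (Y : Set X) := by
  simp only [iInf_add_le_zero_iff Y hnn, mem_closure_iff_asymBall h0 htri ht, sub_neg_eq_add,
    add_comm _ x, Subtype.exists, SetLike.mem_coe, exists_prop]

theorem quotientSeminorm_zero_le {w : X ⧸ Y → ℝ}
    (hw : ∀ x : X, w (Submodule.Quotient.mk x) = ⨅ y : Y, q (x + y)) (hnn : ∀ x, 0 ≤ q x)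
    (h0 : q 0 ≤ 0) : w 0 ≤ 0 :=
  calc w 0 = ⨅ y : Y, q (0 + y) := hw 0
    _ ≤ q (0 + (0 : Y)) := ciInf_le ⟨0, Set.forall_mem_range.2 fun _ => hnn _⟩ 0
    _ ≤ 0 := by simpa using h0

theorem quotientSeminorm_add_le {w : X ⧸ Y → ℝ}
    (hw : ∀ x : X, w (Submodule.Quotient.mk x) = ⨅ y : Y, q (x + y)) (hnn : ∀ x, 0 ≤ q x)
    (htri : ∀ a b, q (a + b) ≤ q a + q b) (u v : X ⧸ Y) :
    w (u + v) ≤ w u + w v := by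
  obtain ⟨x, rfl⟩ := Submodule.Quotient.mk_surjective Y u
  obtain ⟨x', rfl⟩ := Submodule.Quotient.mk_surjective Y v
  rw [← Submodule.Quotient.mk_add, hw, hw, hw]
  refine le_ciInf_add_ciInf fun y y' => ?_
  calc ⨅ z : Y, q (x + x' + z) ≤ q (x + x' + ↑(y + y')) :=
        ciInf_le ⟨0, Set.forall_mem_range.2 fun _ => hnn _⟩ _
    _ = q ((x + y) + (x' + y')) := by rw [Submodule.coe_add]; abel_nf
    _ ≤ q (x + y) + q (x' + y') := htri _ _

end QuotientSeminorm

theorem stmt_11_general {X : Type*} [AddCommGroup X] [Module ℝ X]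
    (q : X → ℝ)
    (hnn : ∀ x, 0 ≤ q x)
    (hhom : ∀ (a : ℝ) (x : X), 0 ≤ a → q (a • x) = a * q x)
    (htri : ∀ x y, q (x + y) ≤ q x + q y)
    [t : TopologicalSpace X]
    (ht : t = TopologicalSpace.generateFrom
      {s : Set X | ∃ (c : X) (ε : ℝ), 0 < ε ∧ s = {y | q (y - c) < ε}})
    (Y : Submodule ℝ X)
    (w : (X ⧸ Y) → ℝ)
    (hw : ∀ x : X, w (Submodule.Quotient.mk x) = ⨅ y : Y, q (x + y))
    [tq : TopologicalSpace (X ⧸ Y)]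
    (htq : tq = TopologicalSpace.generateFrom
      {s : Set (X ⧸ Y) | ∃ (c : X ⧸ Y) (ε : ℝ), 0 < ε ∧ s = {u | w (u - c) < ε}}) :
    @T1Space (X ⧸ Y) tq ↔ IsClosed (Y : Set X) := by
  have hq0 : q 0 ≤ 0 := by simpa using (hhom 0 0 le_rfl).le
  rw [t1Space_iff_asymBall (quotientSeminorm_zero_le Y hw hnn hq0)
    (quotientSeminorm_add_le Y hw hnn htri) htq, ← closure_subset_iff_isClosed,
    (Submodule.Quotient.mk_surjective Y).forall]
  simp only [hw, iInf_add_le_zero_iff_neg_mem_closure Y hnn hq0 htri ht,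
    Submodule.Quotient.mk_eq_zero]
  refine ⟨fun h x hx => ?_, fun h x hx => Y.neg_mem_iff.mp (h hx)⟩
  simpa using h (-x) (by rwa [neg_neg])

theorem stmt_11 {X : Type*} [AddCommGroup X] [Module ℝ X]
    (q : X → ℝ)
    (hnn : ∀ x, 0 ≤ q x)
    (hhom : ∀ (a : ℝ) (x : X), 0 ≤ a → q (a • x) = a * q x)
    (htri : ∀ x y, q (x + y) ≤ q x + q y)
    (hsep : ∀ x, q x = 0 → q (-x) = 0 → x = 0)
    [t : TopologicalSpace X]
    (ht : t = TopologicalSpace.generateFrom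
      {s : Set X | ∃ (c : X) (ε : ℝ), 0 < ε ∧ s = {y | q (y - c) < ε}})
    (Y : Submodule ℝ X)
    (w : (X ⧸ Y) → ℝ)
    (hw : ∀ x : X, w (Submodule.Quotient.mk x) = ⨅ y : Y, q (x + y))
    [tq : TopologicalSpace (X ⧸ Y)]
    (htq : tq = TopologicalSpace.generateFrom
      {s : Set (X ⧸ Y) | ∃ (c : X ⧸ Y) (ε : ℝ), 0 < ε ∧ s = {u | w (u - c) < ε}}) :
    @T1Space (X ⧸ Y) tq ↔ IsClosed (Y : Set X) :=
  stmt_11_general q hnn hhom htri (t := t) ht Y w hw (tq := tq) htq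
end

section
/- Let (X,q) be an asymmetric normed space and Y a linear subspace such that the quotient X/Y (with the quotient asymmetric seminorm w_Y) is T1. Then the q-closure of the linear span of θ_q = {x : q(x)=0} is contained in Y. -/
/-!
The quotient map `X → X ⧸ Y` is `1`-Lipschitz from `q` to `w`, hence continuous for the ball
topologies. If `X ⧸ Y` is T1, then `Y`, the preimage of the closed point `0`, is closed in `X`.
Moreover `q x = 0` makes every ball around `0` contain `x`, so `x ⤳ 0`; continuity gives
`mk x ⤳ 0`, and T1 forces `mk x = 0`. Thus `⟨θ_q⟩ ⊆ Y` and, `Y` being closed, its closure too.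
-/

open TopologicalSpace Topology

section BallTopology

variable {G H : Type*} [AddGroup G] [AddGroup H]

abbrev ballTopology (w : G → ℝ) : TopologicalSpace G :=
  generateFrom {s | ∃ (c : G) (ε : ℝ), 0 < ε ∧ s = {u | w (u - c) < ε}}

theorem isOpen_ballTopology_ball (w : G → ℝ) (c : G) {ε : ℝ} (hε : 0 < ε) :
    IsOpen[ballTopology w] {u | w (u - c) < ε} :=
  isOpen_generateFrom_of_mem ⟨c, ε, hε, rfl⟩

theorem specializes_ballTopology_of_sub_eq_zero {w : G → ℝ}
    (hadd : ∀ u v, w (u + v) ≤ w u + w v) {a b : G} (hab : w (a - b) = 0) :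
    @Specializes G (ballTopology w) a b := by
  let := ballTopology w
  refine tendsto_nhds_generateFrom_iff.2 ?_
  rintro _ ⟨c, ε, hε, rfl⟩ (hb : w (b - c) < ε)
  have hac : w (a - c) < ε := calc
    w (a - c) = w ((a - b) + (b - c)) := by rw [sub_add_sub_cancel]
    _ ≤ w (a - b) + w (b - c) := hadd _ _
    _ < ε := by linarith
  exact (isOpen_ballTopology_ball w c hε).mem_nhds hac

theorem continuous_ballTopology_of_lipschitz {v : G → ℝ} {w : H → ℝ} (hv0 : v 0 = 0)
    (hadd : ∀ u u', w (u + u') ≤ w u + w u') {f : G → H}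
    (hf : ∀ x y, w (f x - f y) ≤ v (x - y)) :
    @Continuous G H (ballTopology v) (ballTopology w) f := by
  let := ballTopology v
  refine continuous_generateFrom_iff.2 ?_
  rintro _ ⟨c, ε, -, rfl⟩
  refine isOpen_iff_forall_mem_open.2 fun x (hx : w (f x - c) < ε) => ?_
  refine ⟨{z | v (z - x) < ε - w (f x - c)}, fun z (hz : v (z - x) < _) => ?_,
    isOpen_ballTopology_ball v x (sub_pos.2 hx), by simpa [hv0] using hx⟩
  show w (f z - c) < ε
  calc w (f z - c) = w ((f z - f x) + (f x - c)) := by rw [sub_add_sub_cancel]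
    _ ≤ w (f z - f x) + w (f x - c) := hadd _ _
    _ ≤ v (z - x) + w (f x - c) := by gcongr; exact hf z x
    _ < ε := by linarith

end BallTopology

section QuotientSeminorm

variable {R X : Type*} [Ring R] [AddCommGroup X] [Module R X] {q : X → ℝ}
  {Y : Submodule R X} {w : X ⧸ Y → ℝ}

theorem quotientInf_le (hnn : ∀ x, 0 ≤ q x)
    (hw : ∀ x : X, w (Submodule.Quotient.mk x) = ⨅ y : Y, q (x + y)) (x : X) (y : Y) :
    w (Submodule.Quotient.mk x) ≤ q (x + y) := by
  rw [hw]
  exact ciInf_le ⟨0, by rintro _ ⟨y, rfl⟩; exact hnn _⟩ y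

theorem quotientInf_mk_le (hnn : ∀ x, 0 ≤ q x)
    (hw : ∀ x : X, w (Submodule.Quotient.mk x) = ⨅ y : Y, q (x + y)) (x : X) :
    w (Submodule.Quotient.mk x) ≤ q x := by
  simpa using quotientInf_le hnn hw x 0

theorem quotientInf_add_le (hnn : ∀ x, 0 ≤ q x) (htri : ∀ x y, q (x + y) ≤ q x + q y)
    (hw : ∀ x : X, w (Submodule.Quotient.mk x) = ⨅ y : Y, q (x + y)) (u v : X ⧸ Y) :
    w (u + v) ≤ w u + w v := by
  obtain ⟨a, rfl⟩ := Submodule.Quotient.mk_surjective Y u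
  obtain ⟨b, rfl⟩ := Submodule.Quotient.mk_surjective Y v
  refine le_of_forall_pos_le_add fun ε hε => ?_
  have hε2 : ∀ x : X, w (Submodule.Quotient.mk x) < w (Submodule.Quotient.mk x) + ε / 2 :=
    fun x => lt_add_of_pos_right _ (half_pos hε)
  obtain ⟨y₁, hy₁⟩ : ∃ y : Y, q (a + y) < w (Submodule.Quotient.mk a) + ε / 2 := by
    have := hε2 a; rw [hw] at this ⊢; exact exists_lt_of_ciInf_lt this
  obtain ⟨y₂, hy₂⟩ : ∃ y : Y, q (b + y) < w (Submodule.Quotient.mk b) + ε / 2 := by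
    have := hε2 b; rw [hw] at this ⊢; exact exists_lt_of_ciInf_lt this
  calc w (Submodule.Quotient.mk a + Submodule.Quotient.mk b)
      ≤ q ((a + b) + ↑(y₁ + y₂)) := by
        rw [← Submodule.Quotient.mk_add]; exact quotientInf_le hnn hw _ _
    _ = q ((a + y₁) + (b + y₂)) := by rw [Submodule.coe_add, add_add_add_comm]
    _ ≤ q (a + y₁) + q (b + y₂) := htri _ _
    _ ≤ _ := by linarith

end QuotientSeminorm

theorem stmt_12_general {X : Type*} [AddCommGroup X] [Module ℝ X]
    (q : X → ℝ)
    (hnn : ∀ x, 0 ≤ q x)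
    (hhom : ∀ (a : ℝ) (x : X), 0 ≤ a → q (a • x) = a * q x)
    (htri : ∀ x y, q (x + y) ≤ q x + q y)
    [t : TopologicalSpace X]
    (ht : t = TopologicalSpace.generateFrom
      {s : Set X | ∃ (c : X) (ε : ℝ), 0 < ε ∧ s = {y | q (y - c) < ε}})
    (Y : Submodule ℝ X)
    (w : (X ⧸ Y) → ℝ)
    (hw : ∀ x : X, w (Submodule.Quotient.mk x) = ⨅ y : Y, q (x + y))
    [tq : TopologicalSpace (X ⧸ Y)]
    (htq : tq = TopologicalSpace.generateFrom
      {s : Set (X ⧸ Y) | ∃ (c : X ⧸ Y) (ε : ℝ), 0 < ε ∧ s = {u | w (u - c) < ε}})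
    (hT1 : @T1Space (X ⧸ Y) tq) :
    @closure X t ((Submodule.span ℝ {x : X | q x = 0} : Set X)) ⊆ (Y : Set X) := by
  obtain rfl : t = ballTopology q := ht
  obtain rfl : tq = ballTopology w := htq
  let := ballTopology q
  let := ballTopology w
  have hq0 : q 0 = 0 := by simpa using hhom 0 0 le_rfl
  have hmk : Continuous (Submodule.Quotient.mk : X → X ⧸ Y) :=
    continuous_ballTopology_of_lipschitz hq0 (quotientInf_add_le hnn htri hw) fun x y => by
      rw [← Submodule.Quotient.mk_sub]; exact quotientInf_mk_le hnn hw _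
  have hYclosed : IsClosed (Y : Set X) := by
    convert (isClosed_singleton (x := (0 : X ⧸ Y))).preimage hmk
    ext; simp [Submodule.Quotient.mk_eq_zero]
  have hθ : {x : X | q x = 0} ⊆ Y := fun x (hx : q x = 0) => by
    have : x ⤳ 0 := specializes_ballTopology_of_sub_eq_zero htri (by rwa [sub_zero])
    simpa using (this.map hmk).eq
  exact closure_minimal (Submodule.span_le.2 hθ) hYclosed

theorem stmt_12 {X : Type*} [AddCommGroup X] [Module ℝ X]
    (q : X → ℝ)
    (hnn : ∀ x, 0 ≤ q x)
    (hhom : ∀ (a : ℝ) (x : X), 0 ≤ a → q (a • x) = a * q x)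
    (htri : ∀ x y, q (x + y) ≤ q x + q y)
    (hsep : ∀ x, q x = 0 → q (-x) = 0 → x = 0)
    [t : TopologicalSpace X]
    (ht : t = TopologicalSpace.generateFrom
      {s : Set X | ∃ (c : X) (ε : ℝ), 0 < ε ∧ s = {y | q (y - c) < ε}})
    (Y : Submodule ℝ X)
    (w : (X ⧸ Y) → ℝ)
    (hw : ∀ x : X, w (Submodule.Quotient.mk x) = ⨅ y : Y, q (x + y))
    [tq : TopologicalSpace (X ⧸ Y)]
    (htq : tq = TopologicalSpace.generateFrom
      {s : Set (X ⧸ Y) | ∃ (c : X ⧸ Y) (ε : ℝ), 0 < ε ∧ s = {u | w (u - c) < ε}})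
    (hT1 : @T1Space (X ⧸ Y) tq) :
    @closure X t ((Submodule.span ℝ {x : X | q x = 0} : Set X)) ⊆ (Y : Set X) :=
  stmt_12_general q hnn hhom htri (t := t) ht Y w hw (tq := tq) htq hT1
end

section
/- Let (X,q) be an asymmetric normed space such that θ_q = {x : q(x)=0} has nonempty interior in the topology of the norm q^s(x) = max{q(x),q(−x)}. Then the covering dimension of X (with the topology induced by q) is 0, and moreover X satisfies the T4 separation axiom. -/
/-! Write `θ = {z | q z = 0}`. Since `q (y + z - c) ≤ q (y - c)` for `z ∈ θ`, every open set is
stable under adding `θ`, i.e. `y + z ⤳ y`. The cone `θ` contains a `qˢ`-ball, so it absorbs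
every direction and `θ - θ = X`; writing `a - b = u - w` with `u, w ∈ θ`, the points `a` and `b`
both specialize to `a - u = b - w`. In a space where any two points have a common specialization,
two open sets covering the space cannot both be proper, so a finite open cover contains `univ`
(giving dimension `0`) and two disjoint closed sets cannot both be nonempty (giving `T4`). -/

/-- A topological space has covering dimension at most `n` if every finite open
cover has a finite open refinement, still covering, of order at most `n`
(i.e. no `n + 2` distinct members of the refinement have a common point). -/
def covDimLE (X : Type*) [TopologicalSpace X] (n : ℕ) : Prop :=
  ∀ 𝒰 : Finset (Set X), (∀ U ∈ 𝒰, IsOpen U) → ⋃₀ (𝒰 : Set (Set X)) = Set.univ →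
    ∃ 𝒱 : Finset (Set X), (∀ V ∈ 𝒱, IsOpen V) ∧ ⋃₀ (𝒱 : Set (Set X)) = Set.univ ∧
      (∀ V ∈ 𝒱, ∃ U ∈ 𝒰, V ⊆ U) ∧
      ∀ 𝒮 ⊆ 𝒱, n + 1 < 𝒮.card → ⋂₀ (𝒮 : Set (Set X)) = ∅

open Set Filter Topology

section CommonSpecialization

variable {X : Type*} [TopologicalSpace X] (h : ∀ a b : X, ∃ c, a ⤳ c ∧ b ⤳ c)
include h

theorem eq_univ_or_eq_univ_of_union_eq_univ {U V : Set X} (hU : IsOpen U) (hV : IsOpen V)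
    (hUV : U ∪ V = univ) : U = univ ∨ V = univ := by
  by_contra! hne
  obtain ⟨a, ha⟩ := (ne_univ_iff_exists_notMem U).mp hne.1
  obtain ⟨b, hb⟩ := (ne_univ_iff_exists_notMem V).mp hne.2
  obtain ⟨c, hac, hbc⟩ := h a b
  rcases (hUV ▸ mem_univ c : c ∈ U ∪ V) with hcU | hcV
  · exact ha (hac.mem_open hU hcU)
  · exact hb (hbc.mem_open hV hcV)

theorem univ_mem_of_sUnion_eq_univ [Nonempty X] (𝒰 : Finset (Set X))
    (hopen : ∀ U ∈ 𝒰, IsOpen U) (hcover : ⋃₀ (𝒰 : Set (Set X)) = univ) : univ ∈ 𝒰 := by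
  classical
  induction 𝒰 using Finset.induction_on with
  | empty =>
    rw [Finset.coe_empty, sUnion_empty] at hcover
    exact absurd hcover empty_ne_univ
  | insert U 𝒰 _ ih =>
    rw [Finset.coe_insert, sUnion_insert] at hcover
    have hopen' : ∀ V ∈ 𝒰, IsOpen V := fun V hV => hopen V (Finset.mem_insert_of_mem hV)
    rcases eq_univ_or_eq_univ_of_union_eq_univ h (hopen U (Finset.mem_insert_self U 𝒰))
      (isOpen_sUnion hopen') hcover with rfl | hrest
    · exact Finset.mem_insert_self _ _
    · exact Finset.mem_insert_of_mem (ih hopen' hrest)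

theorem covDimLE_zero_of_exists_specializes [Nonempty X] : covDimLE X 0 := by
  intro 𝒰 hopen hcover
  refine ⟨{univ}, by simp, by simp, ?_, ?_⟩
  · simpa using univ_mem_of_sUnion_eq_univ h 𝒰 hopen hcover
  · intro 𝒮 h𝒮 hcard
    have := (Finset.card_le_card h𝒮).trans_eq (Finset.card_singleton _)
    omega

theorem normalSpace_of_exists_specializes : NormalSpace X := by
  refine ⟨fun s t hs ht hst => ?_⟩
  have hcover : sᶜ ∪ tᶜ = univ := by rw [← compl_inter, hst.inter_eq, compl_empty]
  rcases eq_univ_or_eq_univ_of_union_eq_univ h hs.isOpen_compl ht.isOpen_compl hcover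
    with hs | ht
  · rw [compl_univ_iff.mp hs]
    exact SeparatedNhds.empty_left t
  · rw [compl_univ_iff.mp ht]
    exact SeparatedNhds.empty_right s

end CommonSpecialization

section AsymmetricNorm

variable {X : Type*} [AddCommGroup X] {q : X → ℝ}

theorem add_specializes_of_eq_zero [t : TopologicalSpace X]
    (htri : ∀ x y, q (x + y) ≤ q x + q y)
    (ht : t = TopologicalSpace.generateFrom
      {s : Set X | ∃ (c : X) (ε : ℝ), 0 < ε ∧ s = {y | q (y - c) < ε}})
    {z : X} (hz : q z = 0) (y : X) : (y + z) ⤳ y := by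
  refine specializes_iff_forall_open.mpr fun U hU hyU => ?_
  subst ht
  induction hU generalizing y with
  | basic s hs =>
    obtain ⟨c, ε, -, rfl⟩ := hs
    calc q (y + z - c) = q ((y - c) + z) := by rw [sub_add_eq_add_sub]
      _ ≤ q (y - c) + q z := htri _ _
      _ < ε := by rw [hz, add_zero]; exact hyU
  | univ => trivial
  | inter s u _ _ ihs ihu => exact ⟨ihs y hyU.1, ihu y hyU.2⟩
  | sUnion S _ ih =>
    obtain ⟨s, hsS, hys⟩ := hyU
    exact ⟨s, hsS, ih s hsS y hys⟩

theorem exists_pos_smul_add_mem_ball [Module ℝ X] {x : X} {ε : ℝ} (hε : 0 < ε)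
    (hhom : ∀ (a : ℝ) (x : X), 0 ≤ a → q (a • x) = a * q x) (v : X) :
    ∃ s : ℝ, 0 < s ∧ max (q (x + s • v - x)) (q (x - (x + s • v))) < ε := by
  have hsmall : ∀ w : X, ∀ᶠ s in 𝓝[>] (0 : ℝ), s * q w < ε := fun w =>
    nhdsWithin_le_nhds <| (continuous_id.mul continuous_const).tendsto' 0 0 (zero_mul _)
      |>.eventually (gt_mem_nhds hε)
  obtain ⟨s, hs, hv, hnv⟩ :=
    (eventually_mem_nhdsWithin.and ((hsmall v).and (hsmall (-v)))).exists
  refine ⟨s, hs, max_lt ?_ ?_⟩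
  · rwa [add_sub_cancel_left, hhom s v hs.le]
  · rwa [sub_add_cancel_left, ← smul_neg, hhom s (-v) hs.le]

theorem exists_eq_sub_of_ball_subset [Module ℝ X]
    (hhom : ∀ (a : ℝ) (x : X), 0 ≤ a → q (a • x) = a * q x)
    (hint : ∃ (x : X) (ε : ℝ), 0 < ε ∧
      {y : X | max (q (y - x)) (q (x - y)) < ε} ⊆ {z : X | q z = 0}) (v : X) :
    ∃ a b : X, q a = 0 ∧ q b = 0 ∧ v = a - b := by
  obtain ⟨x, ε, hε, hball⟩ := hint
  have hq0 : q 0 = 0 := by simpa using hhom 0 0 le_rfl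
  have hx : q x = 0 := hball (by simpa [hq0] using hε)
  obtain ⟨s, hs, hsv⟩ := exists_pos_smul_add_mem_ball hε hhom v
  have hxsv : q (x + s • v) = 0 := hball hsv
  refine ⟨s⁻¹ • (x + s • v), s⁻¹ • x, ?_, ?_, ?_⟩
  · rw [hhom _ _ (inv_nonneg.mpr hs.le), hxsv, mul_zero]
  · rw [hhom _ _ (inv_nonneg.mpr hs.le), hx, mul_zero]
  · rw [← smul_sub, add_sub_cancel_left, inv_smul_smul₀ hs.ne']

theorem exists_common_specialization [Module ℝ X] [t : TopologicalSpace X]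
    (hhom : ∀ (a : ℝ) (x : X), 0 ≤ a → q (a • x) = a * q x)
    (htri : ∀ x y, q (x + y) ≤ q x + q y)
    (ht : t = TopologicalSpace.generateFrom
      {s : Set X | ∃ (c : X) (ε : ℝ), 0 < ε ∧ s = {y | q (y - c) < ε}})
    (hint : ∃ (x : X) (ε : ℝ), 0 < ε ∧
      {y : X | max (q (y - x)) (q (x - y)) < ε} ⊆ {z : X | q z = 0}) (a b : X) :
    ∃ c, a ⤳ c ∧ b ⤳ c := by
  obtain ⟨u, w, hu, hw, huw⟩ := exists_eq_sub_of_ball_subset hhom hint (a - b)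
  have hc : a - u = b - w := sub_eq_sub_iff_sub_eq_sub.mp huw
  refine ⟨a - u, ?_, ?_⟩
  · simpa using add_specializes_of_eq_zero htri ht hu (a - u)
  · simpa [hc] using add_specializes_of_eq_zero htri ht hw (b - w)

end AsymmetricNorm

theorem stmt_17_general {X : Type*} [AddCommGroup X] [Module ℝ X]
    (q : X → ℝ)
    (hhom : ∀ (a : ℝ) (x : X), 0 ≤ a → q (a • x) = a * q x)
    (htri : ∀ x y, q (x + y) ≤ q x + q y)
    [t : TopologicalSpace X]
    (ht : t = TopologicalSpace.generateFrom
      {s : Set X | ∃ (c : X) (ε : ℝ), 0 < ε ∧ s = {y | q (y - c) < ε}})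
    (hint : ∃ (x : X) (ε : ℝ), 0 < ε ∧
      {y : X | max (q (y - x)) (q (x - y)) < ε} ⊆ {z : X | q z = 0}) :
    (covDimLE X 0 ∧ Nonempty X) ∧ NormalSpace X := by
  have h := exists_common_specialization hhom htri ht hint
  exact ⟨⟨covDimLE_zero_of_exists_specializes h, inferInstance⟩,
    normalSpace_of_exists_specializes h⟩

/-- If θ_q has nonempty qˢ-interior, then the covering dimension
of (X, q) is 0 (it is ≤ 0 and X is nonempty) and X is T4 (normal). -/
theorem stmt_17 {X : Type*} [AddCommGroup X] [Module ℝ X]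
    (q : X → ℝ)
    (hnn : ∀ x, 0 ≤ q x)
    (hhom : ∀ (a : ℝ) (x : X), 0 ≤ a → q (a • x) = a * q x)
    (htri : ∀ x y, q (x + y) ≤ q x + q y)
    (hsep : ∀ x, q x = 0 → q (-x) = 0 → x = 0)
    [t : TopologicalSpace X]
    (ht : t = TopologicalSpace.generateFrom
      {s : Set X | ∃ (c : X) (ε : ℝ), 0 < ε ∧ s = {y | q (y - c) < ε}})
    (hint : ∃ (x : X) (ε : ℝ), 0 < ε ∧
      {y : X | max (q (y - x)) (q (x - y)) < ε} ⊆ {z : X | q z = 0}) :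
    (covDimLE X 0 ∧ Nonempty X) ∧ NormalSpace X :=
  stmt_17_general q hhom htri (t := t) ht hint
end

section
/- Let (X,q) be an asymmetric normed space, Y = span(θ_q), and Z a linear subspace with X = Y + Z. If Y is finite-dimensional, then for every finite open cover 𝒰 of X and every z ∈ Z there exists U ∈ 𝒰 such that the affine set Y + z is contained in U. -/
/-!
Translating by a vector `c` with `q c ≤ 0` can only shrink `q`-distances to a centre, so every
open set is invariant under such translations. The vectors with `q c ≤ 0` form a cone `C`
containing all `q`-null vectors, hence `Y ⊆ C - C`. Now suppose each `U ∈ 𝒰` misses some point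
`a_U - b_U + z` with `a_U, b_U ∈ C`. The point `p = z - ∑_V b_V` lies in some `U`, and so does its
translate `p + (a_U + ∑_{V ≠ U} b_V) = a_U - b_U + z`, a contradiction.
-/

open Set

theorem TopologicalSpace.GenerateOpen.mapsTo_self {α : Type*} {g : Set (Set α)} {f : α → α}
    (hg : ∀ s ∈ g, MapsTo f s s) {U : Set α} (hU : GenerateOpen g U) : MapsTo f U U := by
  induction hU with
  | basic s hs => exact hg s hs
  | univ => exact mapsTo_univ f Set.univ
  | inter s u _ _ hs hu => exact hs.inter_inter hu
  | sUnion S _ hS => exact fun p ⟨s, hsS, hps⟩ => ⟨s, hsS, hS s hsS hps⟩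

theorem PointedCone.exists_sub_of_mem_span {R E : Type*} [Ring R] [LinearOrder R]
    [IsOrderedRing R] [AddCommGroup E] [Module R E] {C : PointedCone R E} {y : E}
    (hy : y ∈ Submodule.span R (C : Set E)) : ∃ a ∈ C, ∃ b ∈ C, y = a - b := by
  induction hy using Submodule.span_induction with
  | mem x hx => exact ⟨x, hx, 0, C.zero_mem, (sub_zero x).symm⟩
  | zero => exact ⟨0, C.zero_mem, 0, C.zero_mem, (sub_zero 0).symm⟩
  | add u v _ _ hu hv =>
    obtain ⟨a, ha, b, hb, rfl⟩ := hu
    obtain ⟨a', ha', b', hb', rfl⟩ := hv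
    exact ⟨a + a', C.add_mem ha ha', b + b', C.add_mem hb hb', by abel⟩
  | smul r u _ hu =>
    obtain ⟨a, ha, b, hb, rfl⟩ := hu
    rcases le_total 0 r with hr | hr
    · exact ⟨r • a, C.smul_mem hr ha, r • b, C.smul_mem hr hb, smul_sub r a b⟩
    · refine ⟨(-r) • b, C.smul_mem (neg_nonneg.2 hr) hb, (-r) • a,
        C.smul_mem (neg_nonneg.2 hr) ha, ?_⟩
      rw [smul_sub, neg_smul, neg_smul, sub_neg_eq_add, neg_add_eq_sub]

theorem exists_sub_add_mem_of_finite_cover {X : Type*} [AddCommGroup X] (C : AddSubmonoid X)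
    (𝒰 : Finset (Set X)) (hinv : ∀ U ∈ 𝒰, ∀ c ∈ C, MapsTo (· + c) U U)
    (hcover : ⋃₀ (𝒰 : Set (Set X)) = univ) (z : X) :
    ∃ U ∈ 𝒰, ∀ a ∈ C, ∀ b ∈ C, a - b + z ∈ U := by
  by_contra! hmiss
  choose! a ha b hb hab using hmiss
  obtain ⟨U, hU, hpU⟩ : z - ∑ V ∈ 𝒰, b V ∈ ⋃₀ (𝒰 : Set (Set X)) := hcover ▸ mem_univ _
  have hc : a U + ∑ V ∈ 𝒰.erase U, b V ∈ C :=
    C.add_mem (ha U hU) (C.sum_mem fun V hV => hb V (Finset.mem_of_mem_erase hV))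
  have htrans : z - ∑ V ∈ 𝒰, b V + (a U + ∑ V ∈ 𝒰.erase U, b V) ∈ U := hinv U hU _ hc hpU
  rw [← Finset.add_sum_erase 𝒰 b hU] at htrans
  exact hab U hU (by convert htrans using 1; abel)

section AsymmetricSeminorm

variable {X : Type*} [AddCommGroup X] {q : X → ℝ}

theorem map_zero_of_homogeneous [Module ℝ X]
    (hhom : ∀ (a : ℝ) (x : X), 0 ≤ a → q (a • x) = a * q x) : q 0 = 0 := by
  simpa using hhom 0 0 le_rfl

def nonposCone [Module ℝ X] (hhom : ∀ (a : ℝ) (x : X), 0 ≤ a → q (a • x) = a * q x)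
    (htri : ∀ x y, q (x + y) ≤ q x + q y) : PointedCone ℝ X where
  carrier := {x | q x ≤ 0}
  zero_mem' := (map_zero_of_homogeneous hhom).le
  add_mem' {x y} hx hy := (htri x y).trans (add_nonpos hx hy)
  smul_mem' c x hx := by
    change q ((c : ℝ) • x) ≤ 0
    rw [hhom c x c.2]
    exact mul_nonpos_of_nonneg_of_nonpos c.2 hx

theorem mapsTo_add_ball (htri : ∀ x y, q (x + y) ≤ q x + q y) {c : X} (hc : q c ≤ 0)
    (x₀ : X) (ε : ℝ) : MapsTo (· + c) {y | q (y - x₀) < ε} {y | q (y - x₀) < ε} := by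
  intro y (hy : q (y - x₀) < ε)
  have key : q (y + c - x₀) ≤ q (y - x₀) + q c := by
    simpa only [sub_add_eq_add_sub] using htri (y - x₀) c
  exact key.trans_lt (by linarith)

end AsymmetricSeminorm

theorem stmt_18_general {X : Type*} [AddCommGroup X] [Module ℝ X]
    (q : X → ℝ)
    (hhom : ∀ (a : ℝ) (x : X), 0 ≤ a → q (a • x) = a * q x)
    (htri : ∀ x y, q (x + y) ≤ q x + q y)
    [t : TopologicalSpace X]
    (ht : t = TopologicalSpace.generateFrom
      {s : Set X | ∃ (c : X) (ε : ℝ), 0 < ε ∧ s = {y | q (y - c) < ε}})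
    (Y Z : Submodule ℝ X)
    (hY : Y = Submodule.span ℝ {x : X | q x = 0})
    (𝒰 : Finset (Set X))
    (hopen : ∀ U ∈ 𝒰, IsOpen U)
    (hcover : ⋃₀ (𝒰 : Set (Set X)) = Set.univ) :
    ∀ z ∈ Z, ∃ U ∈ 𝒰, ∀ y ∈ Y, y + z ∈ U := by
  intro z _
  set C := nonposCone hhom htri
  have hinv : ∀ U ∈ 𝒰, ∀ c ∈ C.toAddSubmonoid, MapsTo (· + c) U U := by
    intro U hU c hc
    have hUopen := hopen U hU
    rw [ht] at hUopen
    refine hUopen.mapsTo_self ?_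
    rintro s ⟨x₀, ε, -, rfl⟩
    exact mapsTo_add_ball htri hc x₀ ε
  obtain ⟨U, hU, hmem⟩ := exists_sub_add_mem_of_finite_cover _ 𝒰 hinv hcover z
  refine ⟨U, hU, fun y hy => ?_⟩
  have hYC : Y ≤ Submodule.span ℝ (C : Set X) :=
    hY ▸ Submodule.span_mono fun x (hx : q x = 0) => hx.le
  obtain ⟨a, ha, b, hb, rfl⟩ := PointedCone.exists_sub_of_mem_span (hYC hy)
  exact hmem a ha b hb

theorem stmt_18 {X : Type*} [AddCommGroup X] [Module ℝ X]
    (q : X → ℝ)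
    (hnn : ∀ x, 0 ≤ q x)
    (hhom : ∀ (a : ℝ) (x : X), 0 ≤ a → q (a • x) = a * q x)
    (htri : ∀ x y, q (x + y) ≤ q x + q y)
    (hsep : ∀ x, q x = 0 → q (-x) = 0 → x = 0)
    [t : TopologicalSpace X]
    (ht : t = TopologicalSpace.generateFrom
      {s : Set X | ∃ (c : X) (ε : ℝ), 0 < ε ∧ s = {y | q (y - c) < ε}})
    (Y Z : Submodule ℝ X)
    (hY : Y = Submodule.span ℝ {x : X | q x = 0})
    (hYZ : Y ⊔ Z = ⊤)
    (hfd : FiniteDimensional ℝ Y)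
    (𝒰 : Finset (Set X))
    (hopen : ∀ U ∈ 𝒰, IsOpen U)
    (hcover : ⋃₀ (𝒰 : Set (Set X)) = Set.univ) :
    ∀ z ∈ Z, ∃ U ∈ 𝒰, ∀ y ∈ Y, y + z ∈ U :=
  stmt_18_general q hhom htri (t := t) ht Y Z hY 𝒰 hopen hcover
end

section
/- Every asymmetric normed space satisfying the T_{1/4} separation axiom is T1. -/
/-!
An open set of the ball topology is closed under moves of asymmetric length zero, so
`q (a - b) = 0` forces `a ⤳ b`. If `q v = 0` for some `v ≠ 0`, this gives the chain of
distinct points `v + v ⤳ v ⤳ 0`, and no open set can separate `v` from `{0, v + v}` in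
either direction, contradicting `T_{1/4}`. Hence `q` is positive off `0`, and the `q`-ball
of radius `q (y - x)` around `x` is an open set containing `x` but not `y`.
-/

open TopologicalSpace

def IsTQuarter (X : Type*) [TopologicalSpace X] : Prop :=
  ∀ (x : X) (s : Finset X), x ∉ s →
    ∃ U : Set X, IsOpen U ∧ ((x ∈ U ∧ ∀ y ∈ s, y ∉ U) ∨ (x ∉ U ∧ ∀ y ∈ s, y ∈ U))

theorem IsTQuarter.eq_or_eq_of_specializes {X : Type*} [TopologicalSpace X]
    (hX : IsTQuarter X) {x y z : X} (hxy : x ⤳ y) (hyz : y ⤳ z) : y = x ∨ y = z := by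
  classical
  by_contra! hne
  obtain ⟨U, hU, ⟨hyU, hout⟩ | ⟨hyU, hin⟩⟩ := hX y {x, z} (by simp [hne.1, hne.2])
  · exact hout x (by simp) (hxy.mem_open hU hyU)
  · exact hyU (hyz.mem_open hU (hin z (by simp)))

section AsymmetricBalls

variable {X : Type*} [AddCommGroup X]

def qBalls (q : X → ℝ) : Set (Set X) :=
  {s | ∃ (c : X) (ε : ℝ), 0 < ε ∧ s = {y | q (y - c) < ε}}

variable {q : X → ℝ} [t : TopologicalSpace X] (ht : t = generateFrom (qBalls q))
include ht

theorem isOpen_setOf_lt_of_eq_generateFrom (c : X) {ε : ℝ} (hε : 0 < ε) :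
    IsOpen {y | q (y - c) < ε} := by
  subst ht
  exact GenerateOpen.basic _ ⟨c, ε, hε, rfl⟩

theorem specializes_of_eq_generateFrom (htri : ∀ x y, q (x + y) ≤ q x + q y)
    {a b : X} (hab : q (a - b) = 0) : a ⤳ b := by
  rw [specializes_iff_forall_open]
  intro U hU hb
  subst ht
  induction hU with
  | basic s hs =>
    obtain ⟨c, ε, -, rfl⟩ := hs
    calc q (a - c) = q ((a - b) + (b - c)) := by rw [sub_add_sub_cancel]
      _ ≤ q (a - b) + q (b - c) := htri _ _
      _ < ε := by rwa [hab, zero_add]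
  | univ => trivial
  | inter s u _ _ ihs ihu => exact ⟨ihs hb.1, ihu hb.2⟩
  | sUnion S _ ih =>
    obtain ⟨s, hs, hbs⟩ := hb
    exact ⟨s, hs, ih s hs hbs⟩

theorem pos_of_isTQuarter_of_eq_generateFrom (hX : IsTQuarter X) (hnn : ∀ x, 0 ≤ q x)
    (htri : ∀ x y, q (x + y) ≤ q x + q y) {v : X} (hv : v ≠ 0) : 0 < q v := by
  refine (hnn v).lt_of_ne' fun hqv => ?_
  have h2v : (v + v) ⤳ v :=
    specializes_of_eq_generateFrom ht htri (by rwa [add_sub_cancel_right])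
  have hv0 : v ⤳ 0 := specializes_of_eq_generateFrom ht htri (by rwa [sub_zero])
  rcases hX.eq_or_eq_of_specializes h2v hv0 with h | h
  · exact hv (by simpa using h)
  · exact hv h

end AsymmetricBalls

theorem stmt_19_general {X : Type*} [AddCommGroup X] [Module ℝ X]
    (q : X → ℝ)
    (hnn : ∀ x, 0 ≤ q x)
    (hhom : ∀ (a : ℝ) (x : X), 0 ≤ a → q (a • x) = a * q x)
    (htri : ∀ x y, q (x + y) ≤ q x + q y)
    [t : TopologicalSpace X]
    (ht : t = TopologicalSpace.generateFrom
      {s : Set X | ∃ (c : X) (ε : ℝ), 0 < ε ∧ s = {y | q (y - c) < ε}})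
    (hT14 : ∀ (x : X) (s : Finset X), x ∉ s →
      ∃ U : Set X, IsOpen U ∧
        ((x ∈ U ∧ ∀ y ∈ s, y ∉ U) ∨ (x ∉ U ∧ ∀ y ∈ s, y ∈ U))) :
    T1Space X := by
  have hq0 : q 0 = 0 := by simpa using hhom 0 0 le_rfl
  rw [t1Space_iff_exists_open]
  intro x y hxy
  have hpos : 0 < q (y - x) :=
    pos_of_isTQuarter_of_eq_generateFrom ht hT14 hnn htri (sub_ne_zero.mpr hxy.symm)
  refine ⟨{z | q (z - x) < q (y - x)}, isOpen_setOf_lt_of_eq_generateFrom ht x hpos, ?_, ?_⟩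
  · simpa [hq0] using hpos
  · simp

theorem stmt_19 {X : Type*} [AddCommGroup X] [Module ℝ X]
    (q : X → ℝ)
    (hnn : ∀ x, 0 ≤ q x)
    (hhom : ∀ (a : ℝ) (x : X), 0 ≤ a → q (a • x) = a * q x)
    (htri : ∀ x y, q (x + y) ≤ q x + q y)
    (hsep : ∀ x, q x = 0 → q (-x) = 0 → x = 0)
    [t : TopologicalSpace X]
    (ht : t = TopologicalSpace.generateFrom
      {s : Set X | ∃ (c : X) (ε : ℝ), 0 < ε ∧ s = {y | q (y - c) < ε}})
    (hT14 : ∀ (x : X) (s : Finset X), x ∉ s →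
      ∃ U : Set X, IsOpen U ∧
        ((x ∈ U ∧ ∀ y ∈ s, y ∉ U) ∨ (x ∉ U ∧ ∀ y ∈ s, y ∈ U))) :
    T1Space X :=
  stmt_19_general q hnn hhom htri (t := t) ht hT14
end
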